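/- In the category of G-sets for a discrete group G, a G-set X is a coherent object if and only if X has finitely many orbits and the stabilizer {g ∈ G : g • x = x} of every point x ∈ X is finite. -/
import Mathlib


/-- The set `S` is covered by finitely many `G`-orbits. -/
def OrbitFiniteOn (G : Type) [Group G] {X : Type} [MulAction G X] (S : Set X) : Prop :=
  ∃ T : Set X, T.Finite ∧ ∀ x ∈ S, ∃ g : G, ∃ t ∈ T, g • t = x

/-- For a discrete group `G`, a `G`-set `A` is coherent (compact, and the kernel
pair of every map from a compact `G`-set is compact) iff `A` has finitely many
orbits and all its point stabilizers are finite. -/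
theorem coherent_iff_finite_orbits_and_stabilizers (G : Type) [Group G]
    (A : Type) [MulAction G A] :
    (OrbitFiniteOn G (Set.univ : Set A) ∧
      ∀ (B : Type) [MulAction G B] (f : B → A),
        (∀ (g : G) (b : B), f (g • b) = g • f b) →
        OrbitFiniteOn G (Set.univ : Set B) →
        OrbitFiniteOn G {p : B × B | f p.1 = f p.2}) ↔
    (OrbitFiniteOn G (Set.univ : Set A) ∧
      ∀ a : A, Finite (MulAction.stabilizer G a)) := by
  constructor
  · rintro ⟨h1, h2⟩
    refine ⟨h1, fun a => ?_⟩
    obtain ⟨T, hTfin, hTcov⟩ := h2 G (fun g => g • a)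
      (fun g b => by simp [smul_eq_mul, mul_smul])
      ⟨{1}, Set.finite_singleton 1,
        fun x _ => ⟨x, 1, Set.mem_singleton 1, mul_one x⟩⟩
    have key : ∀ s : MulAction.stabilizer G a,
        ∃ t : T, (s : G) = ((t : G × G)).1⁻¹ * ((t : G × G)).2 := by
      intro s
      have hm : ((1 : G), (s : G)) ∈
          {p : G × G | (fun g => g • a) p.1 = (fun g => g • a) p.2} := by
        have := s.2
        simpa [MulAction.mem_stabilizer_iff] using this.symm
      obtain ⟨g, t, ht, hgt⟩ := hTcov _ hm
      rw [Prod.ext_iff] at hgt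
      obtain ⟨hg1, hg2⟩ := hgt
      have hg1' : g * t.1 = 1 := hg1
      have hg2' : g * t.2 = (s : G) := hg2
      refine ⟨⟨t, ht⟩, ?_⟩
      have hg : g = t.1⁻¹ := eq_inv_of_mul_eq_one_left hg1'
      rw [← hg2', hg]
    haveI := hTfin.to_subtype
    choose t ht using key
    exact Finite.of_injective t fun s s' h => Subtype.ext (by rw [ht s, ht s', h])
  · rintro ⟨h1, hstab⟩
    refine ⟨h1, ?_⟩
    intro B _ f hf hB
    obtain ⟨T, hTfin, hTcov⟩ := hB
    have haux : ∀ d c : A, {h : G | h • d = c}.Finite := by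
      intro d c
      by_cases hne : ∃ h₀ : G, h₀ • d = c
      · obtain ⟨h₀, hh₀⟩ := hne
        have hsub : {h : G | h • d = c} ⊆
            (fun s => h₀ * s) '' ((MulAction.stabilizer G d : Set G)) := by
          intro h hh
          refine ⟨h₀⁻¹ * h, ?_, by group⟩
          have : (h₀⁻¹ * h) • d = d := by
            rw [mul_smul, hh, ← hh₀, inv_smul_smul]
          simpa [MulAction.mem_stabilizer_iff] using this
        haveI := hstab d
        exact (((MulAction.stabilizer G d : Set G).toFinite).image _).subset hsub
      · refine Set.Finite.subset Set.finite_empty ?_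
        intro h hh
        exact absurd ⟨h, hh⟩ hne
    have hFt : ∀ t : B, {b : B | f b = f t}.Finite := by
      intro t
      have hsub : {b : B | f b = f t} ⊆
          ⋃ s ∈ T, (· • s) '' {h : G | h • f s = f t} := by
        intro b hb
        obtain ⟨g, s, hs, hgs⟩ := hTcov b (Set.mem_univ b)
        refine Set.mem_biUnion hs ⟨g, ?_, hgs⟩
        show g • f s = f t
        rw [← hf, hgs]; exact hb
      exact (hTfin.biUnion fun s _ => (haux _ _).image _).subset hsub
    have hU : (⋃ t ∈ T, {b : B | f b = f t}).Finite :=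
      hTfin.biUnion fun t _ => hFt t
    refine ⟨T ×ˢ (⋃ t ∈ T, {b : B | f b = f t}), hTfin.prod hU, ?_⟩
    intro p hp
    obtain ⟨g, t, htT, hgt⟩ := hTcov p.1 (Set.mem_univ p.1)
    have hft : f (g⁻¹ • p.2) = f t := by
      rw [hf]
      have hp' : f p.1 = f p.2 := hp
      rw [← hp', ← hgt, hf, inv_smul_smul]
    refine ⟨g, (t, g⁻¹ • p.2), ⟨htT, Set.mem_biUnion htT hft⟩, ?_⟩
    ext
    · exact hgt
    · exact smul_inv_smul g p.2
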